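/- (Corollary 2, part 1, of the paper.) Under Assumptions 1 and 2, let b ∈ ℝ^K, α ∈ (0,1), and γ ∈ (0,1). If Q(b) ≥ C(γ), then ℙ(T_n(b) > q_{1−α}) ≥ γ. -/

import Mathlib

/-!
For the moment `m̂` realising `Q(b)` one has `E m̂ ≤ -C(γ)`, and `m̂ = n⁻¹ ∑ᵢ Wᵢ` with independent
`Wᵢ = ±wᵢ ∈ [-1, 1]`. Hoeffding's inequality gives `m̂ < E m̂ + √(-2 log(1 - γ) / n)` with
probability at least `γ`, so on that event `-m̂ > q · max{ε, (1 + q²/n)^{-1/2}} / √n`.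
Because `σ̂² ≤ 1 - m̂²`, this pushes the studentized moment `√n (-m̂) / max{σ̂, ε}`, and with it
`T_n(b)`, above `q`.
-/

open MeasureTheory ProbabilityTheory

/-- Sample upper moment `m̂_u(b,v)` computed from outcomes `y`. -/
noncomputable def muHatU {n K : ℕ} (X : Fin n → Fin K → ℝ) (b v : Fin K → ℝ)
    (y : Fin n → ℝ) : ℝ :=
  (n : ℝ)⁻¹ * ∑ i, (2 * y i - 1) *
    (if 0 ≤ (∑ j, X i j * b j) ∧ (∑ j, X i j * v j) < 0 then 1 else 0)

/-- Sample lower moment `m̂_l(b,v)` computed from outcomes `y`. -/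
noncomputable def muHatL {n K : ℕ} (X : Fin n → Fin K → ℝ) (b v : Fin K → ℝ)
    (y : Fin n → ℝ) : ℝ :=
  (n : ℝ)⁻¹ * ∑ i, (1 - 2 * y i) *
    (if (∑ j, X i j * b j) ≤ 0 ∧ 0 < (∑ j, X i j * v j) then 1 else 0)

/-- Sample variance `σ̂_u²(b,v)`. -/
noncomputable def sigHatU2 {n K : ℕ} (X : Fin n → Fin K → ℝ) (b v : Fin K → ℝ)
    (y : Fin n → ℝ) : ℝ :=
  (n : ℝ)⁻¹ * (∑ i, (if 0 ≤ (∑ j, X i j * b j) ∧ (∑ j, X i j * v j) < 0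
      then (1:ℝ) else 0)) - (muHatU X b v y) ^ 2

/-- Sample variance `σ̂_l²(b,v)`. -/
noncomputable def sigHatL2 {n K : ℕ} (X : Fin n → Fin K → ℝ) (b v : Fin K → ℝ)
    (y : Fin n → ℝ) : ℝ :=
  (n : ℝ)⁻¹ * (∑ i, (if (∑ j, X i j * b j) ≤ 0 ∧ 0 < (∑ j, X i j * v j)
      then (1:ℝ) else 0)) - (muHatL X b v y) ^ 2

/-- The test statistic `T_n(b)` computed from outcomes `y`. -/
noncomputable def Tstat {n K : ℕ} (X : Fin n → Fin K → ℝ)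
    (Vu Vl : Finset (Fin K → ℝ)) (hu : Vu.Nonempty) (hl : Vl.Nonempty)
    (ε : ℝ) (b : Fin K → ℝ) (y : Fin n → ℝ) : ℝ :=
  max 0 (max
    (Vu.sup' hu fun v =>
      Real.sqrt n * (-(muHatU X b v y)) /
        max (Real.sqrt (sigHatU2 X b v y)) ε)
    (Vl.sup' hl fun v =>
      Real.sqrt n * (-(muHatL X b v y)) /
        max (Real.sqrt (sigHatL2 X b v y)) ε))

section Hoeffding

variable {Ω : Type*} [MeasurableSpace Ω] {P : Measure Ω} [IsProbabilityMeasure P]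

theorem one_sub_exp_le_measureReal_sum_lt {ι : Type*} [Fintype ι] {W : ι → Ω → ℝ}
    (hind : iIndepFun W P) (hmeas : ∀ i, AEMeasurable (W i) P) {a b : ℝ}
    (hW : ∀ i, ∀ᵐ ω ∂P, W i ω ∈ Set.Icc a b) {t : ℝ} (ht : 0 ≤ t) :
    1 - Real.exp (-t ^ 2 / (2 * (Fintype.card ι * ((b - a) / 2) ^ 2)))
      ≤ P.real {ω | ∑ i, W i ω < ∑ i, P[W i] + t} := by
  have hcentered : iIndepFun (fun i ω => W i ω - P[W i]) P :=
    hind.comp (fun i x => x - ∫ ω, W i ω ∂P) fun i => measurable_id.sub_const _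
  have htail := HasSubgaussianMGF.measure_sum_ge_le_of_iIndepFun hcentered (s := Finset.univ)
    (fun i _ => hasSubgaussianMGF_of_mem_Icc (hmeas i) (hW i)) ht
  have hset : {ω | ∑ i, W i ω < ∑ i, P[W i] + t}
      = {ω | t ≤ ∑ i, (W i ω - P[W i])}ᶜ := by
    ext ω
    simp only [Set.mem_ofPred_eq, Set.mem_compl_iff, Finset.sum_sub_distrib, not_le]
    constructor <;> intro h <;> linarith
  have hnull : NullMeasurableSet {ω | t ≤ ∑ i, (W i ω - P[W i])} P :=
    nullMeasurableSet_le aemeasurable_const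
      (Finset.aemeasurable_fun_sum _ fun i _ => (hmeas i).sub_const _)
  rw [hset, probReal_compl_eq_one_sub₀ hnull]
  convert sub_le_sub_left htail 1 using 5
  simp [div_pow]

end Hoeffding

theorem lt_div_max_sqrt_of_lt {N q ε a σ2 : ℝ} (hN : 0 < N) (hq : 0 ≤ q) (hε : 0 < ε)
    (hσ : σ2 ≤ 1 - a ^ 2) (ha : (√N)⁻¹ * (q * max ε (√(1 + q ^ 2 / N))⁻¹) < a) :
    q < √N * a / max (√σ2) ε := by
  have hrN : 0 < √N := Real.sqrt_pos.mpr hN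
  have hr : 0 < √(1 + q ^ 2 / N) := Real.sqrt_pos.mpr (by positivity)
  have hqa : q * max ε (√(1 + q ^ 2 / N))⁻¹ < √N * a := by
    rwa [inv_mul_lt_iff₀ hrN] at ha
  have ha0 : 0 < a := by
    have : 0 ≤ (√N)⁻¹ * (q * max ε (√(1 + q ^ 2 / N))⁻¹) := by positivity
    linarith
  rw [lt_div_iff₀ (lt_max_of_lt_right hε), mul_max_of_nonneg _ _ hq]
  refine max_lt ?_ ((mul_le_mul_of_nonneg_left (le_max_left _ _) hq).trans_lt hqa)
  -- `1 - a²` is the largest possible `σ2`, and `q √(1 - a²) < √N a` is `q < a √(N + q²)`.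
  have hq' : q < √N * a * √(1 + q ^ 2 / N) := by
    have := (mul_le_mul_of_nonneg_left (le_max_right _ _) hq).trans_lt hqa
    rwa [← div_eq_mul_inv, div_lt_iff₀ hr] at this
  have hsq : q ^ 2 * (1 - a ^ 2) < (√N * a) ^ 2 := by
    have h2 := pow_lt_pow_left₀ hq' hq two_ne_zero
    rw [mul_pow, Real.sq_sqrt (by positivity), mul_pow, Real.sq_sqrt hN.le] at h2
    field_simp at h2
    rw [mul_pow, Real.sq_sqrt hN.le]
    nlinarith
  calc q * √σ2 ≤ q * √(1 - a ^ 2) := by gcongr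
    _ < √N * a := by
      rw [← Real.sqrt_sq hq, ← Real.sqrt_mul (sq_nonneg q)]
      exact (Real.sqrt_lt' (by positivity)).mpr hsq

section Power

variable {Ω : Type*} [MeasurableSpace Ω] {P : Measure Ω} [IsProbabilityMeasure P] {n : ℕ}

theorem le_measureReal_lt_studentized_mean (hn : 0 < n) {W : Fin n → Ω → ℝ}
    (hind : iIndepFun W P) (hmeas : ∀ i, Measurable (W i))
    (hW : ∀ i ω, W i ω ∈ Set.Icc (-1) 1) {q ε γ : ℝ} (hq : 0 ≤ q) (hε : 0 < ε) (hγ : γ < 1)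
    {σ2 : Ω → ℝ} (hσ : ∀ ω, σ2 ω ≤ 1 - ((n : ℝ)⁻¹ * ∑ i, W i ω) ^ 2)
    (hmean : (√n)⁻¹ * (q * max ε (√(1 + q ^ 2 / n))⁻¹ + √(-(2 * Real.log (1 - γ))))
      ≤ -∫ ω, (n : ℝ)⁻¹ * ∑ i, W i ω ∂P) :
    γ ≤ P.real {ω | q < √n * -((n : ℝ)⁻¹ * ∑ i, W i ω) / max (√(σ2 ω)) ε} := by
  set L := -(2 * Real.log (1 - γ))
  have hnR : (0 : ℝ) < n := Nat.cast_pos.mpr hn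
  have hint : ∀ i, Integrable (W i) P := fun i =>
    Integrable.of_mem_Icc (-1) 1 (hmeas i).aemeasurable (ae_of_all _ (hW i))
  have hEmean : ∫ ω, (n : ℝ)⁻¹ * ∑ i, W i ω ∂P = (n : ℝ)⁻¹ * ∑ i, P[W i] := by
    rw [integral_const_mul, integral_finsetSum _ fun i _ => hint i]
  have hHoeffding : 1 - Real.exp (-(√n * √L) ^ 2 / (2 * n))
      ≤ P.real {ω | ∑ i, W i ω < ∑ i, P[W i] + √n * √L} := by
    have := one_sub_exp_le_measureReal_sum_lt hind (fun i => (hmeas i).aemeasurable)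
      (fun i => ae_of_all _ (hW i)) (t := √n * √L) (by positivity)
    norm_num at this
    linarith
  have hγle : γ ≤ 1 - Real.exp (-(√n * √L) ^ 2 / (2 * n)) := by
    have hexp : -(√n * √L) ^ 2 / (2 * n) ≤ Real.log (1 - γ) := by
      rw [mul_pow, Real.sq_sqrt hnR.le, Real.sq_sqrt']
      field_simp
      linarith [le_max_left L 0]
    linarith [Real.exp_le_exp.mpr hexp, Real.exp_log (sub_pos.mpr hγ)]
  have hscale : (n : ℝ)⁻¹ * (√n * √L) = (√n)⁻¹ * √L := by
    nth_rw 1 [← Real.mul_self_sqrt hnR.le]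
    field_simp
  refine hγle.trans (hHoeffding.trans (measureReal_mono fun ω hω => ?_))
  have hlt := mul_lt_mul_of_pos_left hω (inv_pos.mpr hnR)
  rw [mul_add, hscale] at hlt
  refine lt_div_max_sqrt_of_lt hnR hq hε (by rw [neg_sq]; exact hσ ω) ?_
  rw [hEmean, mul_add] at hmean
  linarith

theorem le_measureReal_lt_of_studentized_signed_mean_le (hn : 0 < n) {Y : Fin n → Ω → ℝ}
    (hind : iIndepFun Y P) (hmeas : ∀ i, Measurable (Y i)) (hY : ∀ i ω, Y i ω = 0 ∨ Y i ω = 1)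
    {w : Fin n → ℝ} (hw : ∀ i, |w i| ≤ 1) {q ε γ : ℝ} (hq : 0 ≤ q) (hε : 0 < ε) (hγ : γ < 1)
    {m σ2 T : Ω → ℝ} (hm : ∀ ω, m ω = (n : ℝ)⁻¹ * ∑ i, (2 * Y i ω - 1) * w i)
    (hσ : ∀ ω, σ2 ω ≤ 1 - m ω ^ 2)
    (hmean : (√n)⁻¹ * (q * max ε (√(1 + q ^ 2 / n))⁻¹ + √(-(2 * Real.log (1 - γ))))
      ≤ -∫ ω, m ω ∂P)
    (hT : ∀ ω, √n * -m ω / max (√(σ2 ω)) ε ≤ T ω) :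
    γ ≤ P.real {ω | q < T ω} := by
  have hW : ∀ i ω, (2 * Y i ω - 1) * w i ∈ Set.Icc (-1) 1 := fun i ω => by
    rw [Set.mem_Icc, ← abs_le]
    rcases hY i ω with h | h <;> norm_num [h, abs_mul, hw i]
  have hm' : m = fun ω => (n : ℝ)⁻¹ * ∑ i, (2 * Y i ω - 1) * w i := funext hm
  subst hm'
  refine (le_measureReal_lt_studentized_mean hn (W := fun i ω => (2 * Y i ω - 1) * w i)
    (hind.comp (fun i y => (2 * y - 1) * w i) fun i => by fun_prop) (fun i => by fun_prop) hW
    hq hε hγ hσ hmean).trans (measureReal_mono fun ω hω => lt_of_lt_of_le hω (hT ω))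

end Power

theorem measurable_heaviside_const_add (x : ℝ) :
    Measurable fun u : ℝ => if 0 ≤ x + u then (1 : ℝ) else 0 :=
  Measurable.ite (measurableSet_le measurable_const (by fun_prop)) measurable_const
    measurable_const

theorem exists_mem_le_neg_of_le_neg_min_inf' {ι : Type*} {s : Finset ι} (hs : s.Nonempty)
    {f : ι → ℝ} {C : ℝ} (hC : 0 < C) (h : C ≤ -min 0 (s.inf' hs f)) : ∃ v ∈ s, f v ≤ -C := by
  rw [le_neg, min_le_iff] at h
  rcases h with h | h
  · linarith
  · exact (Finset.inf'_le_iff hs).mp h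

theorem inv_card_mul_sum_boole_le_one {n : ℕ} (p : Fin n → Prop) [DecidablePred p] :
    (n : ℝ)⁻¹ * ∑ i, (if p i then (1 : ℝ) else 0) ≤ 1 := by
  rw [Finset.sum_boole]
  exact inv_mul_le_one_of_le₀ (by exact_mod_cast (Finset.card_filter_le _ _).trans (by simp))
    (Nat.cast_nonneg _)

section Moments

variable {n K : ℕ} (X : Fin n → Fin K → ℝ) (b v : Fin K → ℝ) (y : Fin n → ℝ)

theorem muHatL_eq : muHatL X b v y = (n : ℝ)⁻¹ * ∑ i, (2 * y i - 1) *
    -(if (∑ j, X i j * b j) ≤ 0 ∧ 0 < (∑ j, X i j * v j) then 1 else 0) := by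
  unfold muHatL
  congr 1
  exact Finset.sum_congr rfl fun i _ => by ring

theorem sigHatU2_le : sigHatU2 X b v y ≤ 1 - muHatU X b v y ^ 2 :=
  sub_le_sub_right (inv_card_mul_sum_boole_le_one _) _

theorem sigHatL2_le : sigHatL2 X b v y ≤ 1 - muHatL X b v y ^ 2 :=
  sub_le_sub_right (inv_card_mul_sum_boole_le_one _) _

variable {Vu Vl : Finset (Fin K → ℝ)} (hu : Vu.Nonempty) (hl : Vl.Nonempty) (ε : ℝ)

theorem Tstat_nonneg : 0 ≤ Tstat X Vu Vl hu hl ε b y :=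
  le_max_left _ _

theorem le_Tstat_of_mem_u {v : Fin K → ℝ} (hv : v ∈ Vu) :
    √n * -muHatU X b v y / max (√(sigHatU2 X b v y)) ε ≤ Tstat X Vu Vl hu hl ε b y :=
  (Finset.le_sup' (fun v => √n * -muHatU X b v y / max (√(sigHatU2 X b v y)) ε) hv).trans
    ((le_max_left _ _).trans (le_max_right _ _))

theorem le_Tstat_of_mem_l {v : Fin K → ℝ} (hv : v ∈ Vl) :
    √n * -muHatL X b v y / max (√(sigHatL2 X b v y)) ε ≤ Tstat X Vu Vl hu hl ε b y :=
  (Finset.le_sup' (fun v => √n * -muHatL X b v y / max (√(sigHatL2 X b v y)) ε) hv).trans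
    ((le_max_right _ _).trans (le_max_right _ _))

end Moments

theorem corollary2_part1
    {Ω : Type*} [MeasurableSpace Ω] (P : Measure Ω) [IsProbabilityMeasure P]
    {n K : ℕ} (hn : 1 ≤ n)
    (X : Fin n → Fin K → ℝ) (β : Fin K → ℝ)
    (U : Fin n → Ω → ℝ) (hU : ∀ i, Measurable (U i))
    (Y : Fin n → Ω → ℝ)
    (hY : ∀ i ω, Y i ω = if 0 ≤ (∑ j, X i j * β j) + U i ω then 1 else 0)
    (hindepU : iIndepFun U P)
    (ε : ℝ) (hε : 0 < ε)
    (Vu Vl : Finset (Fin K → ℝ)) (hu : Vu.Nonempty) (hl : Vl.Nonempty)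
    (b : Fin K → ℝ) (γ : ℝ) (hγ : γ ∈ Set.Ioo (0 : ℝ) 1)
    (q : ℝ)
    (Q : ℝ)
    (hQ : Q = max
      (-(min 0 (Vu.inf' hu fun v => ∫ ω, muHatU X b v (fun i => Y i ω) ∂P)))
      (-(min 0 (Vl.inf' hl fun v => ∫ ω, muHatL X b v (fun i => Y i ω) ∂P))))
    (C : ℝ)
    (hC : C = (Real.sqrt n)⁻¹ *
      (q * max ε (Real.sqrt (1 + q ^ 2 / n))⁻¹ + Real.sqrt (-(2 * Real.log (1 - γ)))))
    (hQC : C ≤ Q) :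
    γ ≤ (P {ω | q < Tstat X Vu Vl hu hl ε b (fun i => Y i ω)}).toReal := by
  rw [← measureReal_def]
  rcases lt_or_ge q 0 with hq | hq
  · have huniv : {ω | q < Tstat X Vu Vl hu hl ε b fun i => Y i ω} = Set.univ :=
      Set.eq_univ_of_forall fun ω => hq.trans_le (Tstat_nonneg X b _ hu hl ε)
    rw [huniv, probReal_univ]
    exact hγ.2.le
  have hC0 : 0 < C := by
    rw [hC]
    have hL : 0 < -(2 * Real.log (1 - γ)) := by
      linarith [Real.log_neg (sub_pos.mpr hγ.2) (sub_lt_self 1 hγ.1)]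
    have := Real.sqrt_pos.mpr hL
    positivity
  have hYU : Y = fun i => (fun u => if 0 ≤ (∑ j, X i j * β j) + u then (1 : ℝ) else 0) ∘ U i :=
    funext₂ hY
  have hYind : iIndepFun Y P := hYU ▸ hindepU.comp _ fun i => measurable_heaviside_const_add _
  have hYmeas : ∀ i, Measurable (Y i) :=
    hYU ▸ fun i => (measurable_heaviside_const_add _).comp (hU i)
  have hY01 : ∀ i ω, Y i ω = 0 ∨ Y i ω = 1 := fun i ω => by rw [hY]; split_ifs <;> simp
  rw [hQ, le_max_iff] at hQC
  rcases hQC with hCu | hCl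
  · obtain ⟨v, hv, hEv⟩ := exists_mem_le_neg_of_le_neg_min_inf' hu hC0 hCu
    exact le_measureReal_lt_of_studentized_signed_mean_le hn hYind hYmeas hY01
      (fun i => by split_ifs <;> simp) hq hε hγ.2 (m := fun ω => muHatU X b v fun i => Y i ω)
      (fun ω => rfl) (fun ω => sigHatU2_le X b v _) (by linarith)
      (fun ω => le_Tstat_of_mem_u X b _ hu hl ε hv)
  · obtain ⟨v, hv, hEv⟩ := exists_mem_le_neg_of_le_neg_min_inf' hl hC0 hCl
    exact le_measureReal_lt_of_studentized_signed_mean_le hn hYind hYmeas hY01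
      (fun i => by split_ifs <;> simp) hq hε hγ.2 (m := fun ω => muHatL X b v fun i => Y i ω)
      (fun ω => muHatL_eq X b v _) (fun ω => sigHatL2_le X b v _) (by linarith)
      (fun ω => le_Tstat_of_mem_l X b _ hu hl ε hv)
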